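/- arXiv:1206.0996 — 2 statements merged into one kernel-verified Lean document; each statement's English description precedes it below -/
import Mathlib

section
/- In any alternative ring A, the circle operation satisfies the Moufang identity: for all x, y, z ∈ A, ((x ∘ y) ∘ x) ∘ z = x ∘ (y ∘ (x ∘ z)). Consequently (Proposition 1.4) the set J(A) of quasiregular elements of A is a Moufang loop under the circle operation with identity element 0. -/
/-- The circle operation `x ∘ y = x + y - x * y` on a
(not necessarily associative or unital) ring. -/
def circ {A : Type*} [NonUnitalNonAssocRing A] (x y : A) : A := x + y - x * y

/-- `b` is a quasiinverse of `a`: `a + b - a*b = 0` and `a + b - b*a = 0`. -/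
def IsQuasiinv {A : Type*} [NonUnitalNonAssocRing A] (a b : A) : Prop :=
  a + b - a * b = 0 ∧ a + b - b * a = 0

/-- `a` is quasiregular: it has a quasiinverse. -/
def IsQuasireg {A : Type*} [NonUnitalNonAssocRing A] (a : A) : Prop :=
  ∃ b, IsQuasiinv a b

/-!
Formally adjoining a unit, `1 - x ∘ y = (1 - x) * (1 - y)`: the circle operation is the
multiplication transported along `x ↦ 1 - x`, and its associator is the ring associator
(`circ_circ`). The left and middle Moufang identities of an alternative ring follow from
alternativity and the associator cocycle identity; expanding them at `1 - x, 1 - y, 1 - z`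
leaves only associators of lower degree, which vanish, so they hold for `∘` as well.
For a quasiinverse pair `u, v` the associator `[u, v, a]` vanishes, which gives the inverse
properties `u ∘ (v ∘ a) = a = (a ∘ u) ∘ v`; together with the middle Moufang identity they
show that `y' ∘ x'` is a quasiinverse of `x ∘ y` and that `a ∘ x = b`, `y ∘ a = b` are
uniquely solvable in `J(A)`.
-/

class IsAlternative (A : Type*) [NonUnitalNonAssocRing A] : Prop where
  associator_self_left (x y : A) : associator x x y = 0
  associator_self_right (x y : A) : associator y x x = 0

namespace IsAlternative

variable {A : Type*} [NonUnitalNonAssocRing A] [IsAlternative A]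

theorem associator_swap_left (x y z : A) : associator y x z = -associator x y z := by
  linear_combination (norm := (simp only [associator_apply, add_mul, mul_add]; abel1))
    associator_self_left (x + y) z - associator_self_left x z - associator_self_left y z

theorem associator_swap_right (x y z : A) : associator x z y = -associator x y z := by
  linear_combination (norm := (simp only [associator_apply, add_mul, mul_add]; abel1))
    associator_self_right (y + z) x - associator_self_right y x - associator_self_right z x

theorem associator_self_middle (x y : A) : associator x y x = 0 := by
  rw [associator_swap_right, associator_self_left, neg_zero]

theorem associator_cyclic (x y z : A) : associator y z x = associator x y z := by
  rw [associator_swap_right y x z, associator_swap_left x y z, neg_neg]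

theorem associator_self_mul_middle (x y z : A) :
    associator x (x * y) z = associator (x * x) y z - x * associator x y z := by
  have h := associator_cocycle x x y z
  rw [associator_self_left x (y * z), associator_self_left x y, zero_mul] at h
  linear_combination (norm := abel1) h

theorem associator_moufang_left (x y z : A) :
    associator (x * y) x z + associator x y (x * z) = 0 := by
  rw [associator_swap_left x (x * y) z, associator_swap_right x (x * z) y,
    associator_self_mul_middle, associator_self_mul_middle, associator_swap_right (x * x) y z,
    associator_swap_right x y z, mul_neg]
  abel

theorem associator_mul_self_middle (x y z : A) :
    associator x (y * x) z = x * associator x y z := by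
  have h := associator_cocycle y x x z
  rw [associator_self_left, associator_self_right, mul_zero, zero_mul,
    associator_swap_left x (y * x) z, associator_swap_left (x * x) y z,
    associator_swap_left x y (x * z)] at h
  linear_combination (norm := abel1) h - associator_moufang_left x y z
    + associator_swap_left x (x * y) z - associator_self_mul_middle x y z

theorem moufang_left (x y z : A) : x * y * x * z = x * (y * (x * z)) := by
  linear_combination (norm := (simp only [associator_apply]; abel1)) associator_moufang_left x y z

theorem moufang_middle (x y z : A) : x * y * (z * x) = x * (y * z * x) := by
  have h : associator x y (z * x) = x * associator y z x := by
    rw [associator_swap_right x (z * x) y, associator_mul_self_middle, associator_swap_right x y z,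
      associator_cyclic x y z, mul_neg, neg_neg]
  linear_combination (norm := (simp only [associator_apply, mul_sub]; abel1)) h

end IsAlternative

section Circ

variable {A : Type*} [NonUnitalNonAssocRing A]

@[simp]
theorem zero_circ (x : A) : circ 0 x = x := by simp [circ]

@[simp]
theorem circ_zero (x : A) : circ x 0 = x := by simp [circ]

theorem circ_circ (x y z : A) : circ (circ x y) z = circ x (circ y z) + associator x y z := by
  simp only [circ, associator_apply, mul_add, add_mul, mul_sub, sub_mul]
  abel

theorem isQuasiinv_iff {a b : A} : IsQuasiinv a b ↔ circ a b = 0 ∧ circ b a = 0 := by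
  rw [IsQuasiinv, circ, circ, add_comm b a]

theorem IsQuasiinv.symm {a b : A} (h : IsQuasiinv a b) : IsQuasiinv b a :=
  isQuasiinv_iff.2 (isQuasiinv_iff.1 h).symm

theorem IsQuasiinv.circ_eq_zero {a b : A} (h : IsQuasiinv a b) : circ a b = 0 := h.1

open IsAlternative

variable [IsAlternative A]

theorem circ_self_circ (x y : A) : circ (circ x x) y = circ x (circ x y) := by
  rw [circ_circ, associator_self_left, add_zero]

theorem circ_circ_self (x y : A) : circ (circ y x) x = circ y (circ x x) := by
  rw [circ_circ, associator_self_right, add_zero]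

theorem circ_moufang_left (x y z : A) :
    circ (circ (circ x y) x) z = circ x (circ y (circ x z)) := by
  linear_combination
    (norm := (simp only [circ, associator_apply, mul_add, add_mul, mul_sub, sub_mul]; abel1))
    -moufang_left x y z + associator_swap_left x y z + associator_self_left x z
      + associator_self_middle x y

theorem circ_moufang_middle (x y z : A) :
    circ (circ x y) (circ z x) = circ x (circ (circ y z) x) := by
  linear_combination
    (norm := (simp only [circ, associator_apply, mul_add, add_mul, mul_sub, sub_mul]; abel1))
    -moufang_middle x y z - associator_cyclic x y z + associator_self_middle x y

namespace IsQuasiinv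

variable {u v : A}

theorem associator_eq_zero (h : IsQuasiinv u v) (a : A) : associator u v a = 0 := by
  obtain ⟨huv, hvu⟩ := isQuasiinv_iff.1 h
  set t := associator u v a
  have hu : circ u (circ v a) = a - t := by
    rw [eq_sub_iff_add_eq, ← circ_circ, huv, zero_circ]
  have hv : circ v (circ u a) = a + t := by
    rw [← sub_neg_eq_add, eq_sub_iff_add_eq, ← associator_swap_left, ← circ_circ, hvu,
      zero_circ]
  have hv_sub : circ v (a - t) = circ v a := by
    rw [← hu, ← circ_moufang_left, hvu, zero_circ]
  -- `circ v` is affine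
  have hv_add : circ v (a + t) = circ v a := by
    linear_combination (norm := (simp only [circ, mul_add, mul_sub]; abel1)) -hv_sub
  -- Working with `u` and `v` only leads to `2 • t = 0`; going through
  -- `v ∘ v` avoids dividing by 2.
  have hvv : circ (circ v v) (circ u a) = circ v a := by
    rw [circ_self_circ, hv, hv_add]
  have : circ u (circ v a) = a := by
    rw [← hvv, ← circ_moufang_left, ← circ_circ_self, huv, zero_circ, hvu, zero_circ]
  rwa [hu, sub_eq_self] at this

theorem circ_circ_cancel_left (h : IsQuasiinv u v) (a : A) : circ u (circ v a) = a := by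
  rw [← add_zero (circ u _), ← h.associator_eq_zero a, ← circ_circ, h.circ_eq_zero, zero_circ]

theorem circ_circ_cancel_right (h : IsQuasiinv u v) (a : A) : circ (circ a u) v = a := by
  rw [circ_circ, h.circ_eq_zero, circ_zero, ← associator_cyclic, h.associator_eq_zero,
    add_zero]

theorem circ_circ_eq_zero {x x' y y' : A} (hx : IsQuasiinv x x') (hy : IsQuasiinv y y') :
    circ (circ x y) (circ y' x') = 0 := by
  calc circ (circ x y) (circ y' x')
      = circ (circ x' (circ (circ x x) y)) (circ y' x') := by
        rw [circ_self_circ, hx.symm.circ_circ_cancel_left]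
    _ = circ x' (circ (circ (circ (circ x x) y) y') x') := circ_moufang_middle _ _ _
    _ = 0 := by
        rw [hy.circ_circ_cancel_right, hx.circ_circ_cancel_right, hx.symm.circ_eq_zero]

theorem circ_circ {x x' y y' : A} (hx : IsQuasiinv x x') (hy : IsQuasiinv y y') :
    IsQuasiinv (circ x y) (circ y' x') :=
  isQuasiinv_iff.2 ⟨circ_circ_eq_zero hx hy, circ_circ_eq_zero hy.symm hx.symm⟩

theorem circ_eq_iff_left {a a' x b : A} (h : IsQuasiinv a a') :
    circ a x = b ↔ x = circ a' b := by
  constructor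
  · rintro rfl
    rw [h.symm.circ_circ_cancel_left]
  · rintro rfl
    exact h.circ_circ_cancel_left b

theorem circ_eq_iff_right {a a' x b : A} (h : IsQuasiinv a a') :
    circ x a = b ↔ x = circ b a' := by
  constructor
  · rintro rfl
    rw [h.circ_circ_cancel_right]
  · rintro rfl
    exact h.symm.circ_circ_cancel_right b

end IsQuasiinv

theorem IsQuasireg.circ {x y : A} (hx : IsQuasireg x) (hy : IsQuasireg y) :
    IsQuasireg (circ x y) :=
  let ⟨_, hx'⟩ := hx
  let ⟨_, hy'⟩ := hy
  ⟨_, hx'.circ_circ hy'⟩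

end Circ

/-- **Proposition 1.4.** In any alternative ring the circle operation
satisfies the Moufang identity `((x ∘ y) ∘ x) ∘ z = x ∘ (y ∘ (x ∘ z))` for all
`x, y, z ∈ A`.  Consequently the set `J(A)` of quasiregular elements of `A` is a
Moufang loop under the circle operation, with identity element `0`. -/
theorem circ_moufang {A : Type*} [NonUnitalNonAssocRing A]
    (altl : ∀ x y : A, x * (x * y) = (x * x) * y)
    (altr : ∀ x y : A, (y * x) * x = y * (x * x)) :
    (∀ x y z : A, circ (circ (circ x y) x) z = circ x (circ y (circ x z))) ∧
      (∀ x y : A, IsQuasireg x → IsQuasireg y → IsQuasireg (circ x y)) ∧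
      (IsQuasireg (0 : A) ∧ ∀ x : A, circ 0 x = x ∧ circ x 0 = x) ∧
      (∀ a b : A, IsQuasireg a → IsQuasireg b →
        (∃! x : A, IsQuasireg x ∧ circ a x = b) ∧
        (∃! y : A, IsQuasireg y ∧ circ y a = b)) := by
  have : IsAlternative A :=
    ⟨fun x y ↦ by rw [associator_apply, altl, sub_self],
      fun x y ↦ by rw [associator_apply, altr, sub_self]⟩
  refine ⟨circ_moufang_left, fun _ _ ↦ IsQuasireg.circ,
    ⟨⟨0, isQuasiinv_iff.2 ⟨circ_zero 0, circ_zero 0⟩⟩,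
      fun x ↦ ⟨zero_circ x, circ_zero x⟩⟩,
    fun a b ha hb ↦ ?_⟩
  obtain ⟨a', ha'⟩ := ha
  have ha'_reg : IsQuasireg a' := ⟨a, ha'.symm⟩
  exact ⟨⟨circ a' b, ⟨ha'_reg.circ hb, ha'.circ_eq_iff_left.2 rfl⟩,
      fun _ hx ↦ ha'.circ_eq_iff_left.1 hx.2⟩,
    ⟨circ b a', ⟨hb.circ ha'_reg, ha'.circ_eq_iff_right.2 rfl⟩,
      fun _ hy ↦ ha'.circ_eq_iff_right.1 hy.2⟩⟩
end

section
/- Let A be an alternative ring and R a two-sided ideal of A. Let x₁, x₂ ∈ A be quasiregular and let a be a quasiinverse of x₂. Then x₁ − x₂ ∈ R if and only if a ∘ x₁ ∈ R. (This identifies the cosets of the circle loop U*(A) modulo the normal subloop U*(R).) -/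
def LeftAlternative (A : Type*) [Mul A] : Prop := ∀ x y : A, x * (x * y) = (x * x) * y

def RightAlternative (A : Type*) [Mul A] : Prop := ∀ x y : A, (y * x) * x = y * (x * x)

section Associator

variable {A : Type*} [NonUnitalNonAssocRing A]

theorem LeftAlternative.associator_self_left (h : LeftAlternative A) (x y : A) :
    associator x x y = 0 := by
  rw [associator, h, sub_self]

theorem RightAlternative.associator_self_right (h : RightAlternative A) (x y : A) :
    associator y x x = 0 := by
  rw [associator, h, sub_self]

theorem LeftAlternative.associator_swap_left (h : LeftAlternative A) (x y z : A) :
    associator y x z = -associator x y z := by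
  have hxy := h (x + y) z
  simp only [add_mul, mul_add] at hxy
  rw [associator, associator]
  linear_combination (norm := abel) h x z + h y z - hxy

theorem RightAlternative.associator_swap_right (h : RightAlternative A) (x y z : A) :
    associator x z y = -associator x y z := by
  have hyz := h (y + z) x
  simp only [add_mul, mul_add] at hyz
  rw [associator, associator]
  linear_combination (norm := abel) hyz - h y x - h z x

theorem associator_rotate (hl : LeftAlternative A) (hr : RightAlternative A) (x y z : A) :
    associator y z x = associator x y z := by
  rw [hr.associator_swap_right, hl.associator_swap_left, neg_neg]

theorem associator_self_mid (hl : LeftAlternative A) (hr : RightAlternative A) (x y : A) :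
    associator x y x = 0 := by
  rw [hr.associator_swap_right, hl.associator_self_left, neg_zero]

/-- Kleinfeld's function; in an alternative ring it is alternating in its four arguments. -/
def kleinfeld (w x y z : A) : A :=
  associator (w * x) y z - x * associator w y z - associator x y z * w

theorem kleinfeld_add_kleinfeld_rotate (hl : LeftAlternative A) (hr : RightAlternative A)
    (x y z w : A) : kleinfeld x y z w + kleinfeld w x y z = 0 := by
  have rot := associator_rotate hl hr
  rw [kleinfeld, kleinfeld]
  linear_combination (norm := abel) -associator_cocycle x y z w - associator_cocycle y z w x
    - rot (w * x) y z + x * rot w y z + y * rot x z w - rot x (y * z) w + rot x y (z * w)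

theorem associator_mul_self_left (hl : LeftAlternative A) (hr : RightAlternative A) (x y z : A) :
    associator (x * x) y z = x * associator x y z + associator x y z * x := by
  have h₀ : kleinfeld y z x x = 0 := by
    simp only [kleinfeld, hr.associator_self_right, mul_zero, zero_mul, sub_zero]
  have h : kleinfeld x x y z = 0 := by
    linear_combination (norm := abel) kleinfeld_add_kleinfeld_rotate hl hr x y z x
      - kleinfeld_add_kleinfeld_rotate hl hr y z x x + h₀
  rwa [kleinfeld, sub_sub, sub_eq_zero] at h

theorem associator_mul_left_mid (hl : LeftAlternative A) (hr : RightAlternative A)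
    (x y z : A) : associator x (x * y) z = associator x y z * x := by
  have h := associator_cocycle x x y z
  rw [hl.associator_self_left, hl.associator_self_left, zero_mul] at h
  linear_combination (norm := abel) h + associator_mul_self_left hl hr x y z

theorem middle_moufang (hl : LeftAlternative A) (hr : RightAlternative A) (x y z : A) :
    (x * y) * (z * x) = x * ((y * z) * x) := by
  have h₁ : associator (x * y) z x = associator x y z * x := by
    rw [associator_rotate hl hr, associator_mul_left_mid hl hr]
  have h₂ := associator_self_mid hl hr x (y * z)
  rw [associator] at h₁ h₂
  rw [associator, sub_mul] at h₁
  linear_combination (norm := abel) h₂ - h₁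

end Associator

theorem eq_of_mul_eq_mul_of_mul_eq_one {B : Type*} [NonAssocRing B] (hl : LeftAlternative B)
    (hr : RightAlternative B) {u v s t : B} (huv : u * v = 1) (hvu : v * u = 1)
    (h : v * s = v * t) : s = t := by
  set d := s - t
  have hvd : v * d = 0 := by rw [mul_sub, h, sub_self]
  have hdu : d * u = 0 := by simpa only [huv, hvd, one_mul, zero_mul, mul_zero] using middle_moufang hl hr u v d
  -- the two linearized laws give `v * (u * d) = 2 • d` and `v * (u * d) = d`
  have h₁ := hl.associator_swap_left u v d
  have h₂ := hr.associator_swap_right v u d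
  simp only [associator, huv, hvu, hvd, hdu, one_mul, mul_zero, zero_mul] at h₁ h₂
  have hd : d = 0 := by linear_combination (norm := abel) h₁ - h₂
  exact sub_eq_zero.mp hd

section Unitization

variable {A R : Type*} [NonUnitalNonAssocRing A] [CommRing R] [Module R A]

theorem Unitization.one_sub_inr_mul_one_sub_inr (x y : A) :
    (1 - (x : Unitization R A)) * (1 - y) = 1 - ↑(circ x y) := by
  rw [circ, Unitization.inr_sub, Unitization.inr_add, Unitization.inr_mul]
  simp only [sub_mul, mul_sub, one_mul, mul_one]
  abel

variable [IsScalarTower R A A] [SMulCommClass R A A]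

theorem LeftAlternative.unitization (h : LeftAlternative A) :
    LeftAlternative (Unitization R A) := by
  intro p q
  refine Unitization.ext ?_ ?_
  · simp only [Unitization.fst_mul]; ring
  · simp only [Unitization.snd_mul, Unitization.fst_mul, smul_add, mul_add, add_mul,
      smul_smul, mul_smul_comm, smul_mul_assoc, h p.snd q.snd]
    module

theorem RightAlternative.unitization (h : RightAlternative A) :
    RightAlternative (Unitization R A) := by
  intro p q
  refine Unitization.ext ?_ ?_
  · simp only [Unitization.fst_mul]; ring
  · simp only [Unitization.snd_mul, Unitization.fst_mul, smul_add, mul_add, add_mul,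
      smul_smul, mul_smul_comm, smul_mul_assoc, h p.snd q.snd]
    module

end Unitization

section

variable {A : Type*} [NonUnitalNonAssocRing A]

theorem circ_eq_zero_iff (hl : LeftAlternative A) (hr : RightAlternative A) {x a : A}
    (hx : IsQuasiinv x a) (y : A) : circ a y = 0 ↔ y = x := by
  have hax : circ a x = 0 := by rw [circ, add_comm]; exact hx.2
  refine ⟨fun hay => ?_, fun hyx => hyx ▸ hax⟩
  have key (p q : A) := Unitization.one_sub_inr_mul_one_sub_inr (R := ℤ) p q
  have h : 1 - (y : Unitization ℤ A) = 1 - x :=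
    eq_of_mul_eq_mul_of_mul_eq_one hl.unitization hr.unitization
      (u := 1 - (x : Unitization ℤ A)) (v := 1 - (a : Unitization ℤ A)) ?_ ?_ ?_
  · exact Unitization.inr_injective (sub_right_injective h)
  · rw [key, show circ x a = 0 from hx.1, Unitization.inr_zero, sub_zero]
  · rw [key, hax, Unitization.inr_zero, sub_zero]
  · rw [key, key, hay, hax]

theorem LeftAlternative.ringConQuotient (h : LeftAlternative A) (c : RingCon A) :
    LeftAlternative c.Quotient := by
  rintro ⟨x⟩ ⟨y⟩
  exact congrArg ((↑) : A → c.Quotient) (h x y)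

theorem RightAlternative.ringConQuotient (h : RightAlternative A) (c : RingCon A) :
    RightAlternative c.Quotient := by
  rintro ⟨x⟩ ⟨y⟩
  exact congrArg ((↑) : A → c.Quotient) (h x y)

end

theorem coset_characterization_general {A : Type*} [NonUnitalNonAssocRing A]
    (altl : ∀ x y : A, x * (x * y) = (x * x) * y)
    (altr : ∀ x y : A, (y * x) * x = y * (x * x))
    (R : Set A) (hR0 : (0 : A) ∈ R)
    (hRadd : ∀ x ∈ R, ∀ y ∈ R, x + y ∈ R)
    (hRneg : ∀ x ∈ R, -x ∈ R)
    (hRmul : ∀ a : A, ∀ r ∈ R, a * r ∈ R ∧ r * a ∈ R)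
    (x₁ x₂ a : A) (hx₂ : IsQuasiinv x₂ a) :
    x₁ - x₂ ∈ R ↔ circ a x₁ ∈ R := by
  let I := TwoSidedIdeal.mk' R hR0 (hRadd _ · _ ·) (hRneg _ ·) (fun hy => (hRmul _ _ hy).1)
    (fun hx => (hRmul _ _ hx).2)
  let Q := I.ringCon.Quotient
  have sub_mem_iff (x y : A) : x - y ∈ R ↔ (x : Q) = y := by
    rw [RingCon.eq, I.rel_iff, TwoSidedIdeal.mem_mk']
  have hx₂Q : IsQuasiinv (x₂ : Q) a :=
    ⟨congrArg ((↑) : A → Q) hx₂.1, congrArg ((↑) : A → Q) hx₂.2⟩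
  calc x₁ - x₂ ∈ R ↔ (x₁ : Q) = x₂ := sub_mem_iff x₁ x₂
    _ ↔ circ (a : Q) x₁ = 0 := (circ_eq_zero_iff (LeftAlternative.ringConQuotient altl _)
      (RightAlternative.ringConQuotient altr _) hx₂Q _).symm
    _ ↔ circ a x₁ - 0 ∈ R := (sub_mem_iff (circ a x₁) 0).symm
    _ ↔ circ a x₁ ∈ R := by rw [sub_zero]

/-- **from Proposition 1.7.**  Let `A` be an alternative ring and `R` a
two-sided ideal of `A`.  If `x₁, x₂ ∈ A` are quasiregular and `a` is a quasiinverse of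
`x₂`, then `x₁ - x₂ ∈ R` if and only if `a ∘ x₁ ∈ R`. -/
theorem coset_characterization {A : Type*} [NonUnitalNonAssocRing A]
    (altl : ∀ x y : A, x * (x * y) = (x * x) * y)
    (altr : ∀ x y : A, (y * x) * x = y * (x * x))
    (R : Set A) (hR0 : (0 : A) ∈ R)
    (hRadd : ∀ x ∈ R, ∀ y ∈ R, x + y ∈ R)
    (hRneg : ∀ x ∈ R, -x ∈ R)
    (hRmul : ∀ a : A, ∀ r ∈ R, a * r ∈ R ∧ r * a ∈ R)
    (x₁ x₂ a : A) (hx₁ : IsQuasireg x₁) (hx₂ : IsQuasiinv x₂ a) :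
    x₁ - x₂ ∈ R ↔ circ a x₁ ∈ R :=
  coset_characterization_general altl altr R hR0 hRadd hRneg hRmul x₁ x₂ a hx₂
end
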